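/- (Finite U when d = p) If Re(R(Ψ)) = {Re(Ψ w) : w ∈ ℂ^{p'}} is all of ℝ^p and there exists x̄ ∈ C with Ψ^H x̄ = 0, then U is finite; i.e., there exists u ≥ 0 with X_u ∩ Q ≠ ∅. -/

import Mathlib

open Matrix
open scoped RealInnerProductSpace ENNReal

noncomputable section

def cnorm1 {n : ℕ} (z : Fin n → ℂ) : ℝ := ∑ j, ‖z j‖

noncomputable def cnormInf {n : ℕ} (z : Fin n → ℂ) : ℝ := ⨆ j, ‖z j‖

def psiH {p p' : ℕ} (Ψ : Matrix (Fin p) (Fin p') ℂ) (x : EuclideanSpace ℝ (Fin p)) :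
    Fin p' → ℂ :=
  Matrix.mulVec Ψᴴ fun i => (x i : ℂ)

def rePsi {p p' : ℕ} (Ψ : Matrix (Fin p) (Fin p') ℂ) (w : Fin p' → ℂ) :
    EuclideanSpace ℝ (Fin p) :=
  WithLp.toLp 2 fun i => (Matrix.mulVec Ψ w i).re

def Gset {n : ℕ} (s : Fin n → ℂ) : Set (Fin n → ℂ) :=
  {w | ∀ j, ‖w j‖ ≤ 1 ∧ (s j ≠ 0 → w j = s j / ((‖s j‖ : ℝ) : ℂ))}

def normalCone {p : ℕ} (C : Set (EuclideanSpace ℝ (Fin p))) (x : EuclideanSpace ℝ (Fin p)) :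
    Set (EuclideanSpace ℝ (Fin p)) :=
  {a | ∀ y ∈ C, ⟪a, y - x⟫ ≤ 0}

def XuSet {p p' : ℕ} (C : Set (EuclideanSpace ℝ (Fin p))) (L : EuclideanSpace ℝ (Fin p) → ℝ)
    (Ψ : Matrix (Fin p) (Fin p') ℂ) (u : ℝ) : Set (EuclideanSpace ℝ (Fin p)) :=
  {x ∈ C | ∀ χ ∈ C, L x + u * cnorm1 (psiH Ψ x) ≤ L χ + u * cnorm1 (psiH Ψ χ)}

def QSet {p p' : ℕ} (C : Set (EuclideanSpace ℝ (Fin p))) (Ψ : Matrix (Fin p) (Fin p') ℂ) :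
    Set (EuclideanSpace ℝ (Fin p)) :=
  {x ∈ C | ∀ χ ∈ C, cnorm1 (psiH Ψ x) ≤ cnorm1 (psiH Ψ χ)}

def XdSet {p p' : ℕ} (C : Set (EuclideanSpace ℝ (Fin p))) (L : EuclideanSpace ℝ (Fin p) → ℝ)
    (Ψ : Matrix (Fin p) (Fin p') ℂ) : Set (EuclideanSpace ℝ (Fin p)) :=
  {x ∈ QSet C Ψ | ∀ χ ∈ QSet C Ψ, L x ≤ L χ}

def Ubound {p p' : ℕ} (C : Set (EuclideanSpace ℝ (Fin p))) (L : EuclideanSpace ℝ (Fin p) → ℝ)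
    (Ψ : Matrix (Fin p) (Fin p') ℂ) : ℝ≥0∞ :=
  sInf (ENNReal.ofReal '' {u : ℝ | 0 ≤ u ∧ (XuSet C L Ψ u ∩ QSet C Ψ).Nonempty})

/-!
Since the real parts `Re(Ψ w)` exhaust `ℝ^p`, a real `x` with `Ψ^H x = 0` satisfies
`‖x‖² = Re ⟪Ψ^H x, w⟫ = 0` for a suitable `w`; so `x ↦ ‖Ψ^H x‖₁` is a norm on `ℝ^p`, hence
bounded below by `c ‖x‖` with `c > 0`, and `x̄ = 0` is the only point of `Q`. The gradient
inequality gives `L 0 ≤ L χ + ‖DL(0)‖ ‖χ‖ ≤ L χ + (‖DL(0)‖ / c) ‖Ψ^H χ‖₁`, so `0 ∈ X_u ∩ Q`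
for `u = ‖DL(0)‖ / c`.
-/

theorem ConvexOn.add_apply_sub_le_of_hasFDerivAt {E : Type*} [NormedAddCommGroup E]
    [NormedSpace ℝ E] {s : Set E} {f : E → ℝ} {f' : E →L[ℝ] ℝ} {x y : E}
    (hf : ConvexOn ℝ s f) (hx : x ∈ s) (hy : y ∈ s) (hf' : HasFDerivAt f f' x) :
    f x + f' (y - x) ≤ f y := by
  have hline : ConvexOn ℝ (AffineMap.lineMap x y ⁻¹' s) (f ∘ AffineMap.lineMap x y) :=
    hf.comp_affineMap _
  have hderiv : HasDerivAt (f ∘ AffineMap.lineMap x y) (f' (y - x)) (0 : ℝ) := by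
    have hf'0 : HasFDerivAt f f' (AffineMap.lineMap x y (0 : ℝ)) := by simpa using hf'
    exact hf'0.comp_hasDerivAt (0 : ℝ) AffineMap.hasDerivAt_lineMap
  have hslope := hline.le_slope_of_hasDerivAt (by simpa using hx) (by simpa using hy)
    zero_lt_one hderiv
  simp only [slope_def_field, Function.comp_apply, AffineMap.lineMap_apply_one,
    AffineMap.lineMap_apply_zero, sub_zero, div_one] at hslope
  linarith

theorem ConvexOn.exists_le_add_mul_of_mul_norm_sub_le {E : Type*} [NormedAddCommGroup E]
    [NormedSpace ℝ E] {s : Set E} {f g : E → ℝ} {x : E} {c : ℝ}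
    (hf : ConvexOn ℝ s f) (hx : x ∈ s) (hfx : DifferentiableAt ℝ f x) (hc : 0 < c)
    (hg : ∀ y ∈ s, c * ‖y - x‖ ≤ g y) :
    ∃ u ≥ 0, ∀ y ∈ s, f x ≤ f y + u * g y := by
  set f' := fderiv ℝ f x
  refine ⟨‖f'‖ / c, by positivity, fun y hy => ?_⟩
  have hgrad := hf.add_apply_sub_le_of_hasFDerivAt hx hy hfx.hasFDerivAt
  calc f x ≤ f y - f' (y - x) := by linarith
    _ ≤ f y + ‖f'‖ * ‖y - x‖ := by
      linarith [neg_le_abs (f' (y - x)), f'.le_opNorm (y - x), Real.norm_eq_abs (f' (y - x))]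
    _ = f y + ‖f'‖ / c * (c * ‖y - x‖) := by field_simp
    _ ≤ f y + ‖f'‖ / c * g y := by gcongr; exact hg y hy

theorem norm_le_cnorm1 {n : ℕ} (z : Fin n → ℂ) : ‖z‖ ≤ cnorm1 z :=
  (pi_norm_le_iff_of_nonneg (Finset.sum_nonneg fun j _ => norm_nonneg (z j))).2 fun j =>
    Finset.single_le_sum (fun j _ => norm_nonneg (z j)) (Finset.mem_univ j)

theorem cnorm1_nonneg {n : ℕ} (z : Fin n → ℂ) : 0 ≤ cnorm1 z :=
  (norm_nonneg z).trans (norm_le_cnorm1 z)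

section psiH

variable {p p' : ℕ} (Ψ : Matrix (Fin p) (Fin p') ℂ)

def psiHLinearMap : EuclideanSpace ℝ (Fin p) →ₗ[ℝ] Fin p' → ℂ where
  toFun := psiH Ψ
  map_add' x y := by
    simp only [psiH, PiLp.add_apply, Complex.ofReal_add, ← Matrix.mulVec_add]
    rfl
  map_smul' t x := by
    ext j
    simp [psiH, Matrix.mulVec, dotProduct, Finset.mul_sum, mul_left_comm]

@[simp]
theorem coe_psiHLinearMap : ⇑(psiHLinearMap Ψ) = psiH Ψ := rfl

theorem inner_rePsi (x : EuclideanSpace ℝ (Fin p)) (w : Fin p' → ℂ) :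
    ⟪x, rePsi Ψ w⟫ = (star (psiH Ψ x) ⬝ᵥ w).re := by
  have hreal : star (fun i => (x i : ℂ)) = fun i => (x i : ℂ) := by
    ext i; simp
  rw [psiH, Matrix.star_mulVec, Matrix.conjTranspose_conjTranspose, hreal,
    ← Matrix.dotProduct_mulVec]
  simp [rePsi, PiLp.inner_apply, dotProduct, Complex.re_sum, mul_comm]

theorem psiH_injective (hsurj : ∀ v, ∃ w, rePsi Ψ w = v) : Function.Injective (psiH Ψ) := by
  rw [← coe_psiHLinearMap, injective_iff_map_eq_zero, coe_psiHLinearMap]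
  intro x hx
  obtain ⟨w, rfl⟩ := hsurj x
  rw [← inner_self_eq_zero (𝕜 := ℝ), inner_rePsi, hx]
  simp

theorem exists_pos_mul_norm_le_cnorm1_psiH (hinj : Function.Injective (psiH Ψ)) :
    ∃ c > 0, ∀ x, c * ‖x‖ ≤ cnorm1 (psiH Ψ x) := by
  rw [← coe_psiHLinearMap, LinearMap.injective_iff_antilipschitz] at hinj
  obtain ⟨K, -, hK⟩ := hinj
  obtain ⟨c, hc, hbound⟩ := antilipschitzWith_iff_exists_mul_le_norm.1 ⟨K, hK⟩
  exact ⟨c, hc, fun x => (hbound x).trans (norm_le_cnorm1 _)⟩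

end psiH

theorem statement_9_general {p p' : ℕ}
    (C : Set (EuclideanSpace ℝ (Fin p)))
    (L : EuclideanSpace ℝ (Fin p) → ℝ) (hLcv : ConvexOn ℝ Set.univ L)
    (hLd : Differentiable ℝ L)
    (Ψ : Matrix (Fin p) (Fin p') ℂ)
    (hsurj : ∀ v : EuclideanSpace ℝ (Fin p), ∃ w : Fin p' → ℂ, rePsi Ψ w = v)
    (hbar : ∃ x ∈ C, psiH Ψ x = 0) :
    ∃ u : ℝ, 0 ≤ u ∧ (XuSet C L Ψ u ∩ QSet C Ψ).Nonempty := by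
  obtain ⟨x, hxC, hx⟩ := hbar
  have hx0 : x = 0 := psiH_injective Ψ hsurj (hx.trans (map_zero (psiHLinearMap Ψ)).symm)
  subst hx0
  obtain ⟨c, hc, hbound⟩ := exists_pos_mul_norm_le_cnorm1_psiH Ψ (psiH_injective Ψ hsurj)
  obtain ⟨u, hu, hmin⟩ := hLcv.exists_le_add_mul_of_mul_norm_sub_le (Set.mem_univ 0) (hLd 0) hc
    (g := fun χ => cnorm1 (psiH Ψ χ)) fun χ _ => by simpa using hbound χ
  have hcnorm1_zero : cnorm1 (psiH Ψ 0) = 0 := by simp [hx, cnorm1]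
  refine ⟨u, hu, 0, ⟨hxC, fun χ _ => ?_⟩, hxC, fun χ _ => ?_⟩
  · simpa [hcnorm1_zero] using hmin χ (Set.mem_univ χ)
  · exact hcnorm1_zero ▸ cnorm1_nonneg _

theorem statement_9 {p p' : ℕ} (hp : 0 < p) (hp' : 0 < p')
    (C : Set (EuclideanSpace ℝ (Fin p))) (hCne : C.Nonempty) (hCcl : IsClosed C)
    (hCcv : Convex ℝ C)
    (L : EuclideanSpace ℝ (Fin p) → ℝ) (hLcv : ConvexOn ℝ Set.univ L)
    (hLd : Differentiable ℝ L) (hLb : BddBelow (L '' C))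
    (Ψ : Matrix (Fin p) (Fin p') ℂ)
    (hsurj : ∀ v : EuclideanSpace ℝ (Fin p), ∃ w : Fin p' → ℂ, rePsi Ψ w = v)
    (hbar : ∃ x ∈ C, psiH Ψ x = 0) :
    ∃ u : ℝ, 0 ≤ u ∧ (XuSet C L Ψ u ∩ QSet C Ψ).Nonempty :=
  statement_9_general C L hLcv hLd Ψ hsurj hbar
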